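/- arXiv:1111.4392 — 2 statements merged into one kernel-verified Lean document; each statement's English description precedes it below -/
import Mathlib

section
/- Let T be a k-semigraph and Δ = T ⊔ Δ_μ the associated semimultiplicative set. Then Δ has left cancellation: for all a,b₁,b₂ ∈ Δ, if ab₁ and ab₂ are defined and ab₁ = ab₂, then b₁ = b₂. -/
/-- A semimultiplicative set: a partially defined associative multiplication,
encoded via `Option`: `mul s t = some u` means "`st` is defined and equals `u`". -/
structure SemimultSet (T : Type*) where
  mul : T → T → Option T
  assoc : ∀ s t u : T,
    (mul s t).bind (fun x => mul x u) = (mul t u).bind (fun y => mul s y)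

/-- A `k`-semigraph: a semimultiplicative set with a degree map `d : T → ℕ^k`
satisfying the unique factorisation property. -/
structure Semigraph (k : Type*) (T : Type*) extends SemimultSet T where
  d : T → k → ℕ
  deg_mul : ∀ x y z : T, mul x y = some z → d z = d x + d y
  factor : ∀ (x : T) (n₁ n₂ : k → ℕ), d x = n₁ + n₂ →
    ∃! p : T × T, mul p.1 p.2 = some x ∧ d p.1 = n₁ ∧ d p.2 = n₂

namespace Semigraph

variable {k T : Type*}

/-- `s ≤ t` iff there is `α` with `αs` defined and `αs = t`. -/
def le (S : Semigraph k T) (s t : T) : Prop := ∃ α : T, S.mul α s = some t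

/-- The set `Δ_μ` of tuples `yμ_{α₁,…,αₙ}` (`n ≥ 1`) with `y ≤ αᵢ` for some `i`. -/
def DeltaMu (S : Semigraph k T) : Type _ :=
  { p : T × List T // p.2 ≠ [] ∧ ∃ α ∈ p.2, S.le p.1 α }

/-- `Δ = T ⊔ Δ_μ`. -/
def Delta (S : Semigraph k T) : Type _ := T ⊕ S.DeltaMu

open scoped Classical in
/-- The partial multiplication on `Δ`: products within `T` as in `T`, and
`x · (yμ_α) = (xy)μ_α` whenever `xy` is defined and `(xy)μ_α ∈ Δ_μ`;
all other products are undefined. -/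
noncomputable def deltaMul (S : Semigraph k T) : S.Delta → S.Delta → Option S.Delta
  | Sum.inl x, Sum.inl y => (S.mul x y).map Sum.inl
  | Sum.inl x, Sum.inr ⟨(y, l), hp⟩ =>
      match S.mul x y with
      | some z =>
          if h : ∃ α ∈ l, S.le z α then some (Sum.inr ⟨(z, l), ⟨hp.1, h⟩⟩)
          else none
      | none => none
  | Sum.inr _, _ => none

/-- The minimal common extension set `T^min(x,y)`. -/
def Tmin (S : Semigraph k T) (x y : T) : Set (T × T) :=
  { p | ∃ z : T, S.mul x p.1 = some z ∧ S.mul y p.2 = some z ∧ S.d z = S.d x ⊔ S.d y }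

end Semigraph

/-- The canonical basis vector `δ_t` of `ℓ²(G)`. -/
noncomputable def deltaVec {G : Type*} (t : G) : lp (fun _ : G => ℂ) 2 :=
  haveI := Classical.decEq G
  lp.single 2 t 1

/-- `la` is the family of left translation operators associated to the partial
multiplication `m`: `la s δ_t = δ_{st}` if `st` is defined, and `0` otherwise. -/
def IsLambdaFam {G : Type*} (m : G → G → Option G)
    (la : G → (lp (fun _ : G => ℂ) 2 →L[ℂ] lp (fun _ : G => ℂ) 2)) : Prop :=
  ∀ s t : G, la s (deltaVec t) = (m s t).elim 0 deltaVec

/-!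
A product `x · b` in `Δ` multiplies the underlying element of `b` by `x` in `T` and keeps the
labels `α₁,…,αₙ` of `b`, and an element of `Δ` is determined by its underlying element and its
labels. So left cancellation in `Δ` reduces to left cancellation in `T`, which holds because
`xy₁ = xy₂` gives two factorisations of degrees `(d x, d y₁)`, and these must coincide.
-/

namespace Semigraph

variable {k T : Type*} (S : Semigraph k T)

theorem mul_left_cancel {x y₁ y₂ z : T} (h₁ : S.mul x y₁ = some z) (h₂ : S.mul x y₂ = some z) :
    y₁ = y₂ := by
  have hd₁ := S.deg_mul x y₁ z h₁
  have hd : S.d y₂ = S.d y₁ := add_left_cancel (hd₁ ▸ S.deg_mul x y₂ z h₂).symm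
  obtain ⟨p, -, huniq⟩ := S.factor z (S.d x) (S.d y₁) hd₁
  exact congrArg Prod.snd ((huniq (x, y₁) ⟨h₁, rfl, rfl⟩).trans (huniq (x, y₂) ⟨h₂, rfl, hd⟩).symm)

variable {S}

/-- The underlying element `y` of `y ∈ T` or of `yμ_{α₁,…,αₙ} ∈ Δ_μ`. -/
def Delta.base : S.Delta → T
  | .inl y => y
  | .inr m => m.1.1

def Delta.labels : S.Delta → Option (List T)
  | .inl _ => none
  | .inr m => some m.1.2

theorem Delta.base_labels_injective :
    Function.Injective fun b : S.Delta => (b.base, b.labels) := by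
  rintro (y₁ | ⟨⟨y₁, l₁⟩, hp₁⟩) (y₂ | ⟨⟨y₂, l₂⟩, hp₂⟩) h <;>
    simp only [Delta.base, Delta.labels, Prod.mk.injEq, Option.some.injEq, reduceCtorEq,
      and_false] at h
  · rw [h.1]
  · obtain ⟨rfl, rfl⟩ := h
    rfl

theorem deltaMul_eq_some {a b c : S.Delta} (h : S.deltaMul a b = some c) :
    ∃ x, a = .inl x ∧ S.mul x b.base = some c.base ∧ c.labels = b.labels := by
  rcases a with x | _
  swap
  · simp [deltaMul] at h
  refine ⟨x, rfl, ?_⟩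
  rcases b with y | ⟨⟨y, l⟩, hp⟩
  · obtain ⟨z, hz, rfl⟩ := Option.map_eq_some_iff.mp h
    exact ⟨hz, rfl⟩
  · simp only [deltaMul] at h
    rcases hxy : S.mul x y with _ | z <;> simp only [hxy, reduceCtorEq] at h
    split_ifs at h
    cases h
    exact ⟨hxy, rfl⟩

end Semigraph

/-- `Δ` has left cancellation. -/
theorem delta_leftCancellation {k T : Type*} (S : Semigraph k T) :
    ∀ a b₁ b₂ c : S.Delta,
      S.deltaMul a b₁ = some c → S.deltaMul a b₂ = some c → b₁ = b₂ := by
  intro a b₁ b₂ c h₁ h₂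
  obtain ⟨x, rfl, hmul₁, hlabels₁⟩ := Semigraph.deltaMul_eq_some h₁
  obtain ⟨x', hx, hmul₂, hlabels₂⟩ := Semigraph.deltaMul_eq_some h₂
  cases Sum.inl.inj hx
  exact Semigraph.Delta.base_labels_injective
    (Prod.ext (S.mul_left_cancel hmul₁ hmul₂) (hlabels₁.symm.trans hlabels₂))
end

section
/- Let T be a k-semigraph in which every element of T^(0) is idempotent, and let Δ = T ⊔ Δ_μ be the associated left-cancellative semimultiplicative set with operators λ_a (a ∈ Δ) on ℓ²(Δ). Let α₁,…,αₙ ∈ T and set p := (λ_{α₁}*λ_{α₁})⋯(λ_{αₙ}*λ_{αₙ}). If p ≠ 0, then: (i) s(αᵢ) = s(α₁) for all i; (ii) the tuple μ_α := (s(α₁),α₁,…,αₙ) belongs to Δ_μ and p δ_{μ_α} = δ_{μ_α}; and (iii) for all y₁,…,y_l ∈ T, if q := (λ_{y₁}*λ_{y₁})⋯(λ_{y_l}*λ_{y_l}) satisfies q ≤ p and q ≠ p (as orthogonal projections), then q δ_{μ_α} = 0. -/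
/-!
For a left-cancellative partial multiplication, `λ_a* λ_a` is the diagonal projection onto the
span of those `δ_b` with `ab` defined. So `p` is the diagonal projection onto the `δ_b` with
every `αᵢ b` defined, and `q ≤ p`, `q ≠ p` becomes a strict inclusion of these index sets.
If `p ≠ 0`, the `αᵢ` have a common right multiplier `v`; by unique factorisation `s(αᵢ)` is
then the unique degree-zero left unit of `v`, which gives (i), and idempotence of `T^(0)`
gives (ii). For (iii), if every `y_j μ_α` were defined then `y_j s(α₁) ≤ α_m` for some `m`;
as `s(α₁)` acts trivially on everything the `αᵢ` multiply, `y_j b` is defined whenever all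
`αᵢ b` are, so `q = p`.
-/

section LeftTranslation

variable {G : Type*}

local notation "H" => lp (fun _ : G => ℂ) 2

open scoped InnerProductSpace

def LeftCancel (m : G → G → Option G) : Prop :=
  ∀ a b b' c, m a b = some c → m a b' = some c → b = b'

noncomputable def adjointMulSelfProd (la : G → (H →L[ℂ] H)) {n : ℕ} (f : Fin n → G) :
    H →L[ℂ] H :=
  (List.ofFn fun i => ContinuousLinearMap.adjoint (la (f i)) * la (f i)).prod

theorem deltaVec_apply [DecidableEq G] (t t' : G) :
    (deltaVec t : ∀ _ : G, ℂ) t' = if t' = t then 1 else 0 := by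
  simp [deltaVec, lp.single_apply, Pi.single_apply]

theorem deltaVec_ne_zero (t : G) : (deltaVec t : H) ≠ 0 := by
  classical
  intro h
  simpa [deltaVec_apply] using congrArg (fun f : H => f t) h

theorem inner_deltaVec_left (t : G) (f : H) : ⟪deltaVec t, f⟫_ℂ = f t := by
  classical
  simp [deltaVec, lp.inner_single_left]

theorem ContinuousLinearMap.ext_deltaVec {A B : H →L[ℂ] H}
    (h : ∀ t : G, A (deltaVec t) = B (deltaVec t)) : A = B := by
  classical
  refine lp.ext_continuousLinearMap (by norm_num) fun t => ContinuousLinearMap.ext_ring ?_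
  simpa [deltaVec] using h t

variable {m : G → G → Option G}
  {la : G → (lp (fun _ : G => ℂ) 2 →L[ℂ] lp (fun _ : G => ℂ) 2)}

theorem adjoint_mul_self_apply_deltaVec (hm : LeftCancel m) (hla : IsLambdaFam m la)
    (a b : G) :
    (ContinuousLinearMap.adjoint (la a) * la a) (deltaVec b) =
      if (m a b).isSome then deltaVec b else 0 := by
  classical
  cases hab : m a b with
  | none => simp [hla a b, hab]
  | some c =>
    ext t
    rw [mul_apply_eq_comp, ← inner_deltaVec_left,
      ContinuousLinearMap.adjoint_inner_right, hla, hla, hab]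
    cases hat : m a t with
    | none =>
      have : t ≠ b := by rintro rfl; simp [hab] at hat
      simp [this, deltaVec_apply]
    | some c' =>
      have : c' = c ↔ t = b :=
        ⟨fun h => hm a t b c (h ▸ hat) hab, by rintro rfl; simpa [hab] using hat.symm⟩
      simp [inner_deltaVec_left, deltaVec_apply, this]

theorem adjointMulSelfProd_apply_deltaVec (hm : LeftCancel m) (hla : IsLambdaFam m la)
    {n : ℕ} (f : Fin n → G) (b : G) :
    adjointMulSelfProd la f (deltaVec b) =
      if ∀ i, (m (f i) b).isSome then deltaVec b else 0 := by
  induction n with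
  | zero => simp [adjointMulSelfProd]
  | succ n ih =>
    unfold adjointMulSelfProd at ih ⊢
    rw [List.ofFn_succ, List.prod_cons, mul_apply_eq_comp, ih (fun i => f i.succ)]
    by_cases hL : ∀ i : Fin n, (m (f i.succ) b).isSome
    · rw [if_pos hL, adjoint_mul_self_apply_deltaVec hm hla]
      simp [Fin.forall_fin_succ, hL]
    · simp [hL, Fin.forall_fin_succ]

theorem exists_forall_isSome_of_adjointMulSelfProd_ne_zero (hm : LeftCancel m)
    (hla : IsLambdaFam m la) {n : ℕ} {f : Fin n → G} (hf : adjointMulSelfProd la f ≠ 0) :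
    ∃ b, ∀ i, (m (f i) b).isSome := by
  by_contra! h
  refine hf (ContinuousLinearMap.ext_deltaVec fun b => ?_)
  obtain ⟨i, hi⟩ := h b
  rw [adjointMulSelfProd_apply_deltaVec hm hla, if_neg fun hall => hi (hall i)]
  rfl

theorem adjointMulSelfProd_eq_of_forall_isSome_iff (hm : LeftCancel m)
    (hla : IsLambdaFam m la) {n l : ℕ} {f : Fin n → G} {g : Fin l → G}
    (h : ∀ b, (∀ i, (m (f i) b).isSome) ↔ ∀ j, (m (g j) b).isSome) :
    adjointMulSelfProd la f = adjointMulSelfProd la g :=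
  ContinuousLinearMap.ext_deltaVec fun b => by
    simp only [adjointMulSelfProd_apply_deltaVec hm hla, h]

theorem forall_isSome_of_adjointMulSelfProd_mul_eq (hm : LeftCancel m)
    (hla : IsLambdaFam m la) {n l : ℕ} {f : Fin n → G} {g : Fin l → G}
    (hgf : adjointMulSelfProd la g * adjointMulSelfProd la f = adjointMulSelfProd la g)
    {b : G} (hg : ∀ j, (m (g j) b).isSome) : ∀ i, (m (f i) b).isSome := by
  by_contra hf
  have := congrArg (fun A => A (deltaVec b)) hgf
  simp only [mul_apply_eq_comp, adjointMulSelfProd_apply_deltaVec hm hla,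
    if_neg hf, if_pos hg, map_zero] at this
  exact deltaVec_ne_zero b this.symm

end LeftTranslation

namespace Semigraph

variable {k T : Type*} (S : Semigraph k T)

theorem eq_of_mul_eq_of_deg_eq {a b a' b' z : T} (h : S.mul a b = some z)
    (h' : S.mul a' b' = some z) (hd : S.d a = S.d a') : a = a' ∧ b = b' := by
  have hd' : S.d b = S.d b' := by
    have := (S.deg_mul a b z h).symm.trans (S.deg_mul a' b' z h')
    rw [hd] at this
    exact add_left_cancel this
  exact Prod.ext_iff.mp ((S.factor z (S.d a) (S.d b) (S.deg_mul a b z h)).unique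
    (y₁ := (a, b)) (y₂ := (a', b')) ⟨h, rfl, rfl⟩ ⟨h', hd.symm, hd'.symm⟩)

theorem mul_left_cancel_s18 {x y y' z : T} (h : S.mul x y = some z) (h' : S.mul x y' = some z) :
    y = y' :=
  (S.eq_of_mul_eq_of_deg_eq h h' rfl).2

theorem le_trans {a b c : T} (hab : S.le a b) (hbc : S.le b c) : S.le a c := by
  obtain ⟨β, hβ⟩ := hab
  obtain ⟨γ, hγ⟩ := hbc
  have := S.assoc γ β a
  rw [hβ, Option.bind_some, hγ] at this
  obtain ⟨η, -, hη⟩ := Option.bind_eq_some_iff.mp this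
  exact ⟨η, hη⟩

theorem le_refl (hidem : ∀ e : T, S.d e = 0 → S.mul e e = some e) (t : T) : S.le t t := by
  obtain ⟨⟨e, x⟩, ⟨hex, he, -⟩, -⟩ := S.factor t 0 (S.d t) (zero_add _).symm
  have := S.assoc e e x
  rw [hidem e he, Option.bind_some, hex, Option.bind_some] at this
  exact ⟨e, this.symm⟩

theorem mul_eq_self_of_isSome_mul {e x x' y : T} (he : S.d e = 0) (hx : S.mul x' e = some x)
    (hxy : (S.mul x y).isSome) : S.mul e y = some y := by
  obtain ⟨z, hz⟩ := Option.isSome_iff_exists.mp hxy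
  have := S.assoc x' e y
  rw [hx, Option.bind_some, hz] at this
  obtain ⟨w, hw, hx'w⟩ := Option.bind_eq_some_iff.mp this.symm
  have hdx : S.d x' = S.d x := by simpa [he] using (S.deg_mul x' e x hx).symm
  rwa [(S.eq_of_mul_eq_of_deg_eq hx'w hz hdx).2] at hw

theorem eq_of_deg_zero_of_mul_eq_self {e e' y : T} (he : S.d e = 0) (he' : S.d e' = 0)
    (h : S.mul e y = some y) (h' : S.mul e' y = some y) : e = e' :=
  (S.eq_of_mul_eq_of_deg_eq h h' (he.trans he'.symm)).1

theorem mul_eq_self_of_mul_idem {e x x' : T} (hee : S.mul e e = some e)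
    (hx : S.mul x' e = some x) : S.mul x e = some x := by
  have := S.assoc x' e e
  rwa [hx, hee, Option.bind_some, Option.bind_some, hx] at this

theorem exists_mul_le_of_le {y e z x v w : T} (hz : S.mul y e = some z) (hzx : S.le z x)
    (hw : S.mul x v = some w) (hev : S.mul e v = some v) :
    ∃ u, S.mul y v = some u ∧ S.le u w := by
  obtain ⟨γ, hγ⟩ := hzx
  have h₁ := S.assoc γ z v
  rw [hγ, Option.bind_some, hw] at h₁
  obtain ⟨u, hu, hγu⟩ := Option.bind_eq_some_iff.mp h₁.symm
  have h₂ := S.assoc y e v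
  rw [hz, hev, Option.bind_some, Option.bind_some, hu] at h₂
  exact ⟨u, h₂.symm, γ, hγu⟩

def IsSourceMap (src : T → T) : Prop :=
  ∀ x : T, S.d (src x) = 0 ∧ ∃ x' : T, S.mul x' (src x) = some x

section Source

variable {S} {src : T → T}

theorem src_mul_of_isSome (hsrc : S.IsSourceMap src)
    {x v : T} (h : (S.mul x v).isSome) : S.mul (src x) v = some v :=
  S.mul_eq_self_of_isSome_mul (hsrc x).1 (hsrc x).2.choose_spec h

theorem src_eq_of_isSome (hsrc : S.IsSourceMap src)
    {x y v : T} (hx : (S.mul x v).isSome) (hy : (S.mul y v).isSome) :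
    src x = src y :=
  S.eq_of_deg_zero_of_mul_eq_self (hsrc x).1 (hsrc y).1 (src_mul_of_isSome hsrc hx)
    (src_mul_of_isSome hsrc hy)

theorem mul_src (hsrc : S.IsSourceMap src)
    (hidem : ∀ e : T, S.d e = 0 → S.mul e e = some e) (x : T) :
    S.mul x (src x) = some x :=
  S.mul_eq_self_of_mul_idem (hidem _ (hsrc x).1) (hsrc x).2.choose_spec

end Source

def deltaBase : S.Delta → T
  | Sum.inl y => y
  | Sum.inr μ => μ.1.1

def deltaTail : S.Delta → Option (List T)
  | Sum.inl _ => none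
  | Sum.inr μ => some μ.1.2

theorem delta_ext {b b' : S.Delta} (hbase : S.deltaBase b = S.deltaBase b')
    (htail : S.deltaTail b = S.deltaTail b') : b = b' := by
  rcases b with y | ⟨⟨y, l⟩, hμ⟩ <;> rcases b' with y' | ⟨⟨y', l'⟩, hμ'⟩ <;>
    simp only [deltaBase, deltaTail, reduceCtorEq, Option.some.injEq] at hbase htail
  · rw [hbase]
  · subst hbase htail
    rfl

theorem isSome_deltaMul_inr_iff {x y : T} {l : List T} {hμ} :
    (S.deltaMul (Sum.inl x) (Sum.inr ⟨(y, l), hμ⟩)).isSome ↔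
      ∃ z, S.mul x y = some z ∧ ∃ a ∈ l, S.le z a := by
  cases hxy : S.mul x y with
  | none => simp [deltaMul, hxy]
  | some z =>
    by_cases h : ∃ a ∈ l, S.le z a
    · simp only [deltaMul, hxy, h, dite_true]
      exact ⟨fun _ => ⟨z, rfl, h⟩, fun _ => rfl⟩
    · simp [deltaMul, hxy, h]

theorem mul_deltaBase_of_deltaMul_eq_some {x : T} {b c : S.Delta}
    (h : S.deltaMul (Sum.inl x) b = some c) :
    S.mul x (S.deltaBase b) = some (S.deltaBase c) ∧ S.deltaTail c = S.deltaTail b := by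
  rcases b with y | ⟨⟨y, l⟩, hμ⟩
  · obtain ⟨z, hz, rfl⟩ := Option.map_eq_some_iff.mp h
    exact ⟨hz, rfl⟩
  · cases hxy : S.mul x y with
    | none => simp [deltaMul, hxy] at h
    | some z =>
      by_cases hle : ∃ a ∈ l, S.le z a
      · simp only [deltaMul, hxy, hle, dite_true] at h
        obtain rfl := Option.some.inj h
        exact ⟨hxy, rfl⟩
      · simp [deltaMul, hxy, hle] at h

theorem isSome_mul_deltaBase {x : T} {b : S.Delta} (h : (S.deltaMul (Sum.inl x) b).isSome) :
    (S.mul x (S.deltaBase b)).isSome := by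
  obtain ⟨c, hc⟩ := Option.isSome_iff_exists.mp h
  rw [(S.mul_deltaBase_of_deltaMul_eq_some hc).1]
  rfl

theorem leftCancel_deltaMul : LeftCancel S.deltaMul := by
  rintro (x | μ) b b' c h h'
  · obtain ⟨hb, hbc⟩ := S.mul_deltaBase_of_deltaMul_eq_some h
    obtain ⟨hb', hbc'⟩ := S.mul_deltaBase_of_deltaMul_eq_some h'
    exact S.delta_ext (S.mul_left_cancel_s18 hb hb') (hbc.symm.trans hbc')
  · cases h

theorem isSome_deltaMul_of_le {x y e z : T} {b : S.Delta} (hz : S.mul y e = some z)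
    (hzx : S.le z x) (he : S.mul e (S.deltaBase b) = some (S.deltaBase b))
    (hx : (S.deltaMul (Sum.inl x) b).isSome) : (S.deltaMul (Sum.inl y) b).isSome := by
  rcases b with v | ⟨⟨v, l⟩, hμ⟩
  · change ((S.mul x v).map _).isSome at hx
    obtain ⟨w, hw⟩ := Option.isSome_iff_exists.mp (Option.isSome_map ▸ hx)
    obtain ⟨u, hu, -⟩ := S.exists_mul_le_of_le hz hzx hw he
    change ((S.mul y v).map _).isSome
    rw [hu]
    rfl
  · obtain ⟨w, hw, a, ha, hwa⟩ := S.isSome_deltaMul_inr_iff.mp hx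
    obtain ⟨u, hu, huw⟩ := S.exists_mul_le_of_le hz hzx hw he
    exact S.isSome_deltaMul_inr_iff.mpr ⟨u, hu, a, ha, S.le_trans huw hwa⟩

section Projections

variable {S} {src : T → T} {n : ℕ} {α : Fin n → T} {e : T}
  {la : S.Delta → (lp (fun _ : S.Delta => ℂ) 2 →L[ℂ] lp (fun _ : S.Delta => ℂ) 2)}

theorem src_eq_of_adjointMulSelfProd_ne_zero (hla : IsLambdaFam S.deltaMul la)
    (hsrc : S.IsSourceMap src) (hp : adjointMulSelfProd la (fun i => Sum.inl (α i)) ≠ 0)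
    (i j : Fin n) : src (α i) = src (α j) := by
  obtain ⟨b, hb⟩ :=
    exists_forall_isSome_of_adjointMulSelfProd_ne_zero S.leftCancel_deltaMul hla hp
  exact src_eq_of_isSome hsrc (S.isSome_mul_deltaBase (hb i)) (S.isSome_mul_deltaBase (hb j))

theorem isSome_deltaMul_mu (hidem : ∀ e : T, S.d e = 0 → S.mul e e = some e)
    (hsrc : S.IsSourceMap src) (he : ∀ i, src (α i) = e)
    (hμ : List.ofFn α ≠ [] ∧ ∃ a ∈ List.ofFn α, S.le e a) (i : Fin n) :
    (S.deltaMul (Sum.inl (α i)) (Sum.inr ⟨(e, List.ofFn α), hμ⟩)).isSome :=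
  S.isSome_deltaMul_inr_iff.mpr
    ⟨α i, he i ▸ mul_src hsrc hidem (α i), α i, List.mem_ofFn.mpr ⟨i, rfl⟩,
      S.le_refl hidem _⟩

theorem isSome_deltaMul_of_isSome_deltaMul_mu (hsrc : S.IsSourceMap src)
    (he : ∀ i, src (α i) = e) {hμ : List.ofFn α ≠ [] ∧ ∃ a ∈ List.ofFn α, S.le e a}
    {y : T} (hy : (S.deltaMul (Sum.inl y) (Sum.inr ⟨(e, List.ofFn α), hμ⟩)).isSome)
    {t : S.Delta} (ht : ∀ i, (S.deltaMul (Sum.inl (α i)) t).isSome) :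
    (S.deltaMul (Sum.inl y) t).isSome := by
  obtain ⟨z, hz, a, ha, hza⟩ := S.isSome_deltaMul_inr_iff.mp hy
  obtain ⟨m, rfl⟩ := List.mem_ofFn.mp ha
  have hunit : S.mul e (S.deltaBase t) = some (S.deltaBase t) :=
    he m ▸ src_mul_of_isSome hsrc (S.isSome_mul_deltaBase (ht m))
  exact S.isSome_deltaMul_of_le hz hza hunit (ht m)

theorem adjointMulSelfProd_apply_mu (hidem : ∀ e : T, S.d e = 0 → S.mul e e = some e)
    (hla : IsLambdaFam S.deltaMul la) (hsrc : S.IsSourceMap src) (he : ∀ i, src (α i) = e)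
    (hμ : List.ofFn α ≠ [] ∧ ∃ a ∈ List.ofFn α, S.le e a) :
    adjointMulSelfProd la (fun i => Sum.inl (α i))
        (deltaVec (Sum.inr ⟨(e, List.ofFn α), hμ⟩ : S.Delta)) =
      deltaVec (Sum.inr ⟨(e, List.ofFn α), hμ⟩ : S.Delta) :=
  (adjointMulSelfProd_apply_deltaVec S.leftCancel_deltaMul hla _ _).trans
    (if_pos (isSome_deltaMul_mu hidem hsrc he hμ))

theorem adjointMulSelfProd_apply_mu_eq_zero (hla : IsLambdaFam S.deltaMul la)
    (hsrc : S.IsSourceMap src) (he : ∀ i, src (α i) = e)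
    (hμ : List.ofFn α ≠ [] ∧ ∃ a ∈ List.ofFn α, S.le e a) {l : ℕ} {y : Fin l → T}
    (hyα : adjointMulSelfProd la (fun j => Sum.inl (y j)) *
      adjointMulSelfProd la (fun i => Sum.inl (α i)) =
        adjointMulSelfProd la (fun j => Sum.inl (y j)))
    (hne : adjointMulSelfProd la (fun j => Sum.inl (y j)) ≠
      adjointMulSelfProd la (fun i => Sum.inl (α i))) :
    adjointMulSelfProd la (fun j => Sum.inl (y j))
      (deltaVec (Sum.inr ⟨(e, List.ofFn α), hμ⟩ : S.Delta)) = 0 := by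
  refine (adjointMulSelfProd_apply_deltaVec S.leftCancel_deltaMul hla _ _).trans
    (if_neg fun hy => ?_)
  refine hne (adjointMulSelfProd_eq_of_forall_isSome_iff S.leftCancel_deltaMul hla fun t =>
    ⟨forall_isSome_of_adjointMulSelfProd_mul_eq S.leftCancel_deltaMul hla hyα, fun ht j => ?_⟩)
  exact isSome_deltaMul_of_isSome_deltaMul_mu hsrc he (hy j) ht

end Projections

end Semigraph

/-- if `p = Q_(α₁) ⋯ Q_(αₙ) ≠ 0` then all `αᵢ` have the same source,
the tuple `μ_α = (s(α₁), α₁, …, αₙ)` lies in `Δ_μ` with `p δ_(μ_α) = δ_(μ_α)`, and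
every projection `q = Q_(y₁) ⋯ Q_(y_l)` with `q ≤ p`, `q ≠ p` kills `δ_(μ_α)`. -/
theorem lambda_source_projection {k T : Type*} (S : Semigraph k T)
    (hidem : ∀ e : T, S.d e = 0 → S.mul e e = some e)
    (la : S.Delta → (lp (fun _ : S.Delta => ℂ) 2 →L[ℂ] lp (fun _ : S.Delta => ℂ) 2))
    (hla : IsLambdaFam S.deltaMul la)
    (src : T → T)
    (hsrc : ∀ x : T, S.d (src x) = 0 ∧ ∃ x' : T, S.mul x' (src x) = some x)
    (n : ℕ) (hn : 0 < n) (α : Fin n → T)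
    (hp : (List.ofFn fun i =>
        ContinuousLinearMap.adjoint (la (Sum.inl (α i))) * la (Sum.inl (α i))).prod ≠ 0) :
    (∀ i : Fin n, src (α i) = src (α ⟨0, hn⟩)) ∧
    ∃ hμ : (List.ofFn α ≠ [] ∧ ∃ a ∈ List.ofFn α, S.le (src (α ⟨0, hn⟩)) a),
      ((List.ofFn fun i =>
          ContinuousLinearMap.adjoint (la (Sum.inl (α i))) * la (Sum.inl (α i))).prod
        (deltaVec (Sum.inr ⟨(src (α ⟨0, hn⟩), List.ofFn α), hμ⟩ : S.Delta)) =
        deltaVec (Sum.inr ⟨(src (α ⟨0, hn⟩), List.ofFn α), hμ⟩ : S.Delta)) ∧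
      ∀ (l : ℕ) (y : Fin l → T),
        (List.ofFn fun j =>
            ContinuousLinearMap.adjoint (la (Sum.inl (y j))) * la (Sum.inl (y j))).prod *
          (List.ofFn fun i =>
            ContinuousLinearMap.adjoint (la (Sum.inl (α i))) * la (Sum.inl (α i))).prod =
          (List.ofFn fun j =>
            ContinuousLinearMap.adjoint (la (Sum.inl (y j))) * la (Sum.inl (y j))).prod →
        (List.ofFn fun j =>
            ContinuousLinearMap.adjoint (la (Sum.inl (y j))) * la (Sum.inl (y j))).prod ≠
          (List.ofFn fun i =>
            ContinuousLinearMap.adjoint (la (Sum.inl (α i))) * la (Sum.inl (α i))).prod →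
        (List.ofFn fun j =>
            ContinuousLinearMap.adjoint (la (Sum.inl (y j))) * la (Sum.inl (y j))).prod
          (deltaVec (Sum.inr ⟨(src (α ⟨0, hn⟩), List.ofFn α), hμ⟩ : S.Delta)) = 0 := by
  have hsrcα : ∀ i, src (α i) = src (α ⟨0, hn⟩) := fun i =>
    Semigraph.src_eq_of_adjointMulSelfProd_ne_zero hla hsrc hp i _
  have hμ : List.ofFn α ≠ [] ∧ ∃ a ∈ List.ofFn α, S.le (src (α ⟨0, hn⟩)) a :=
    ⟨by simpa using hn.ne', α ⟨0, hn⟩, List.mem_ofFn.mpr ⟨_, rfl⟩,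
      α ⟨0, hn⟩, Semigraph.mul_src hsrc hidem _⟩
  exact ⟨hsrcα, hμ, Semigraph.adjointMulSelfProd_apply_mu hidem hla hsrc hsrcα hμ,
    fun _ _ hyα hne =>
      Semigraph.adjointMulSelfProd_apply_mu_eq_zero hla hsrc hsrcα hμ hyα hne⟩
end
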